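/- arXiv:2312.15140 — 5 statements merged into one kernel-verified Lean document; each statement's English description precedes it below -/
import Mathlib

section
/- Let G = (V, E) be a finite simple graph on n vertices. Suppose L' ⊆ V is a nonempty set of size l' such that every vertex w ∈ L' satisfies |Γ(w) ∩ L'| ≥ |Γ(w) ∩ (V \ L')|, and suppose the vertices of V \ L' can be ordered u₁, ..., u_{n-l'} such that each u_i has strictly more neighbors in L' ∪ {u_j : j < i} than in the complement of that set. Then n - l' ≤ l'(l' - 1), and consequently l' ≥ √n. -/
/-!
Each vertex of `L'` has at most `l' - 1` neighbours in `L'` and hence at most `l' - 1` outside,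
so the edge boundary of `L'` is at most `l'(l' - 1)`. Adding `u₁, u₂, …` one at a time, the
hypothesis on `uᵢ` says it has more edges into the current set than out of it, so each addition
strictly decreases the boundary. A natural number can strictly decrease at most `l'(l' - 1)` times.
-/

open Finset

namespace SimpleGraph

variable {V : Type*} [Fintype V] [DecidableEq V] (G : SimpleGraph V) [DecidableRel G.Adj]

def boundaryCount (S : Finset V) : ℕ :=
  ∑ v ∈ S, #(G.neighborFinset v ∩ Sᶜ)

lemma card_neighborFinset_inter (v : V) (T : Finset V) :
    #(G.neighborFinset v ∩ T) = ∑ w ∈ T, if G.Adj v w then 1 else 0 := by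
  rw [← card_filter, neighborFinset_eq_filter, filter_inter, univ_inter]

lemma boundaryCount_insert {S : Finset V} {x : V} (hx : x ∉ S) :
    G.boundaryCount (insert x S) + #(G.neighborFinset x ∩ S) =
      G.boundaryCount S + #(G.neighborFinset x ∩ Sᶜ) := by
  have hxc : x ∈ Sᶜ := mem_compl.2 hx
  simp only [boundaryCount, compl_insert, sum_insert hx, card_neighborFinset_inter,
    ← add_sum_erase _ _ hxc, G.irrefl, if_false, zero_add, sum_add_distrib, adj_comm _ x]
  ring

lemma card_neighborFinset_inter_le {S : Finset V} {v : V} (hv : v ∈ S) :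
    #(G.neighborFinset v ∩ S) ≤ #S - 1 := by
  rw [← card_erase_of_mem hv]
  refine card_le_card fun w hw => ?_
  obtain ⟨hvw, hwS⟩ := mem_inter.1 hw
  exact mem_erase.2 ⟨(G.ne_of_adj ((mem_neighborFinset _ _ _).1 hvw)).symm, hwS⟩

lemma boundaryCount_le {S : Finset V}
    (hS : ∀ w ∈ S, #(G.neighborFinset w ∩ Sᶜ) ≤ #(G.neighborFinset w ∩ S)) :
    G.boundaryCount S ≤ #S * (#S - 1) :=
  calc G.boundaryCount S ≤ ∑ w ∈ S, (#S - 1) :=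
        sum_le_sum fun w hw => (hS w hw).trans (G.card_neighborFinset_inter_le hw)
    _ = #S * (#S - 1) := by rw [sum_const, smul_eq_mul]

lemma boundaryCount_insert_lt {S : Finset V} {x : V} (hx : x ∉ S)
    (h : #(G.neighborFinset x ∩ Sᶜ) < #(G.neighborFinset x ∩ S)) :
    G.boundaryCount (insert x S) < G.boundaryCount S := by
  have := G.boundaryCount_insert hx
  omega

lemma card_le_boundaryCount_of_ordering {m : ℕ} {S : Finset V} {u : Fin m → V}
    (hu_inj : Function.Injective u) (hu_notMem : ∀ i, u i ∉ S)
    (hu : ∀ i : Fin m,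
      #(G.neighborFinset (u i) ∩ (S ∪ (univ.filter (fun j => j < i)).image u)ᶜ) <
      #(G.neighborFinset (u i) ∩ (S ∪ (univ.filter (fun j => j < i)).image u))) :
    m ≤ G.boundaryCount S := by
  let P : ℕ → Finset V := fun k => S ∪ (univ.filter fun j : Fin m => (j : ℕ) < k).image u
  have hP_eq (i : Fin m) : P i = S ∪ (univ.filter (fun j => j < i)).image u := by
    simp only [P, Fin.lt_def]
  have hP_succ (i : Fin m) : P (i + 1) = insert (u i) (P i) := by
    ext v
    simp only [P, mem_union, mem_insert, mem_image, mem_filter, mem_univ, true_and,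
      Nat.lt_succ_iff_lt_or_eq, Fin.val_inj]
    grind
  have hu_notMem_P (i : Fin m) : u i ∉ P i := by
    simp only [P, mem_union, mem_image, mem_filter, mem_univ, true_and, not_or, not_exists,
      not_and]
    exact ⟨hu_notMem i, fun j hj hji => (hu_inj hji ▸ hj).false⟩
  have hdecay : ∀ k ≤ m, G.boundaryCount (P k) + k ≤ G.boundaryCount S := by
    intro k
    induction k with
    | zero => simp [P]
    | succ k ih =>
      intro hk
      let i : Fin m := ⟨k, hk⟩
      have hlt : G.boundaryCount (P (k + 1)) < G.boundaryCount (P k) :=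
        hP_succ i ▸ G.boundaryCount_insert_lt (hu_notMem_P i) (hP_eq i ▸ hu i)
      have := ih (Nat.le_of_succ_le hk)
      omega
  have := hdecay m le_rfl
  omega

end SimpleGraph

theorem Nat.le_mul_self_of_sub_le_mul_sub_one {n l : ℕ} (h : n - l ≤ l * (l - 1)) :
    n ≤ l * l := by
  rw [Nat.mul_sub_one] at h
  have := Nat.le_mul_self l
  omega

theorem stmt_5_general {V : Type*} [Fintype V] [DecidableEq V] (G : SimpleGraph V)
    [DecidableRel G.Adj] (n : ℕ)
    (L' : Finset V) (l' : ℕ) (hl' : L'.card = l')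
    (hin : ∀ w ∈ L', (G.neighborFinset w ∩ L'ᶜ).card ≤ (G.neighborFinset w ∩ L').card)
    (u : Fin (n - l') → V) (hu_inj : Function.Injective u)
    (hu_range : ∀ v : V, v ∉ L' ↔ ∃ i, u i = v)
    (hu : ∀ i : Fin (n - l'),
      (G.neighborFinset (u i) ∩ (L' ∪ (univ.filter (fun j => j < i)).image u)ᶜ).card <
      (G.neighborFinset (u i) ∩ (L' ∪ (univ.filter (fun j => j < i)).image u)).card) :
    n - l' ≤ l' * (l' - 1) ∧ Real.sqrt n ≤ l' := by
  have hbound : n - l' ≤ l' * (l' - 1) := by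
    subst hl'
    exact (G.card_le_boundaryCount_of_ordering hu_inj (fun i => (hu_range _).2 ⟨i, rfl⟩) hu).trans
      (G.boundaryCount_le hin)
  refine ⟨hbound, ?_⟩
  rw [Real.sqrt_le_left (Nat.cast_nonneg _), sq]
  exact_mod_cast Nat.le_mul_self_of_sub_le_mul_sub_one hbound

/-- If `L'` is a nonempty set of `l'` vertices each having at least as many neighbors
inside `L'` as outside, and the remaining `n - l'` vertices can be ordered
`u₁, …, u_{n-l'}` so that each `uᵢ` has strictly more neighbors in
`L' ∪ {u_j : j < i}` than outside it, then `n - l' ≤ l'(l' - 1)` and `l' ≥ √n`. -/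
theorem stmt_5 {V : Type*} [Fintype V] [DecidableEq V] (G : SimpleGraph V)
    [DecidableRel G.Adj] (n : ℕ) (hn : Fintype.card V = n)
    (L' : Finset V) (hne : L'.Nonempty) (l' : ℕ) (hl' : L'.card = l')
    (hin : ∀ w ∈ L', (G.neighborFinset w ∩ L'ᶜ).card ≤ (G.neighborFinset w ∩ L').card)
    (u : Fin (n - l') → V) (hu_inj : Function.Injective u)
    (hu_range : ∀ v : V, v ∉ L' ↔ ∃ i, u i = v)
    (hu : ∀ i : Fin (n - l'),
      (G.neighborFinset (u i) ∩ (L' ∪ (univ.filter (fun j => j < i)).image u)ᶜ).card <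
      (G.neighborFinset (u i) ∩ (L' ∪ (univ.filter (fun j => j < i)).image u)).card) :
    n - l' ≤ l' * (l' - 1) ∧ Real.sqrt n ≤ l' :=
  stmt_5_general G n L' l' hl' hin u hu_inj hu_range hu
end

section
/- Let n ≥ 3 and α ≥ 2. The minimum, over all placements S on the cycle C_n = v₁,...,v_n such that among every three cyclically consecutive nodes at least two are assigned position 1, of the cost ∑_v cost(v), where cost(v) = α − p(v) and p(v) is the position chosen for v by S (so cost(v) = α − 1 if position 1 is chosen and at most α − 1 otherwise), equals (2⌊n/3⌋ + (n mod 3))·(α − 1). -/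
open Finset

private lemma count_aux (α : ℕ) (n : ℕ) :
    ∑ i ∈ Finset.range n, (α - (if i % 3 = 2 then α else 1)) =
      (2 * (n / 3) + n % 3) * (α - 1) := by
  induction n with
  | zero => simp
  | succ n ih =>
    rw [Finset.sum_range_succ, ih]
    by_cases h : n % 3 = 2
    · rw [if_pos h, Nat.sub_self]
      have hc : 2 * ((n+1) / 3) + (n+1) % 3 = 2 * (n / 3) + n % 3 := by omega
      rw [hc, add_zero]
    · rw [if_neg h]
      have hc : 2 * ((n+1) / 3) + (n+1) % 3 = (2 * (n / 3) + n % 3) + 1 := by omega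
      rw [hc]; ring

/-- On the cycle `C_n` (`n ≥ 3`), among placements assigning each node a position in
`{1,…,α}` (`α ≥ 2`) such that among every three cyclically consecutive nodes at least
two are assigned position `1`, the minimum of the total cost `∑_v (α − position(v))`
equals `(2⌊n/3⌋ + (n mod 3))·(α − 1)`. -/
theorem stmt_10 (n α : ℕ) [NeZero n] (hn : 3 ≤ n) (hα : 2 ≤ α) :
    IsLeast {c : ℕ | ∃ pos : ZMod n → ℕ,
        (∀ v, 1 ≤ pos v ∧ pos v ≤ α) ∧
        (∀ i : ZMod n,
          (pos i = 1 ∧ pos (i + 1) = 1) ∨ (pos i = 1 ∧ pos (i + 2) = 1) ∨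
          (pos (i + 1) = 1 ∧ pos (i + 2) = 1)) ∧
        c = ∑ v : ZMod n, (α - pos v)}
      ((2 * (n / 3) + n % 3) * (α - 1)) := by
  have h1n : (1 : ℕ) < n := by omega
  have hval1 : ((1 : ℕ) : ZMod n).val = 1 := ZMod.val_cast_of_lt (by omega)
  have hval2 : ((2 : ℕ) : ZMod n).val = 2 := ZMod.val_cast_of_lt (by omega)
  -- vals of i+1 and i+2
  have hv1 : ∀ i : ZMod n, (i + 1).val = (i.val + 1) % n := by
    intro i
    have : (1 : ZMod n) = ((1 : ℕ) : ZMod n) := by norm_cast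
    rw [this, ZMod.val_add, hval1]
  have hv2 : ∀ i : ZMod n, (i + 2).val = (i.val + 2) % n := by
    intro i
    have : (2 : ZMod n) = ((2 : ℕ) : ZMod n) := by norm_cast
    rw [this, ZMod.val_add, hval2]
  constructor
  · -- membership: the explicit placement
    refine ⟨fun v => if v.val % 3 = 2 then α else 1, ?_, ?_, ?_⟩
    · intro v
      dsimp only
      split <;> omega
    · intro i
      have hi := ZMod.val_lt i
      have h1 := hv1 i
      have h2 := hv2 i
      set a := i.val with ha
      have key : ¬ (a % 3 = 2 ∧ (i+1).val % 3 = 2) ∧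
          ¬ (a % 3 = 2 ∧ (i+2).val % 3 = 2) ∧
          ¬ ((i+1).val % 3 = 2 ∧ (i+2).val % 3 = 2) := by
        rcases lt_trichotomy (a + 2) n with h | h | h
        · have e1 : (a + 1) % n = a + 1 := Nat.mod_eq_of_lt (by omega)
          have e2 : (a + 2) % n = a + 2 := Nat.mod_eq_of_lt h
          rw [h1, h2, e1, e2]; omega
        · have e1 : (a + 1) % n = a + 1 := Nat.mod_eq_of_lt (by omega)
          have e2 : (a + 2) % n = 0 := by rw [h, Nat.mod_self]
          rw [h1, h2, e1, e2]; omega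
        · have ea : a + 1 = n := by omega
          have e1 : (a + 1) % n = 0 := by rw [ea, Nat.mod_self]
          have e2 : (a + 2) % n = 1 := by
            have : a + 2 = n + 1 := by omega
            rw [this, Nat.add_mod_left, Nat.mod_eq_of_lt h1n]
          rw [h1, h2, e1, e2]; omega
      obtain ⟨k1, k2, k3⟩ := key
      by_cases hA : a % 3 = 2
      · right; right
        constructor
        · exact if_neg (fun h => k1 ⟨hA, h⟩)
        · exact if_neg (fun h => k2 ⟨hA, h⟩)
      · by_cases hB : (i+1).val % 3 = 2
        · right; left
          exact ⟨if_neg hA, if_neg (fun h => k3 ⟨hB, h⟩)⟩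
        · left
          exact ⟨if_neg hA, if_neg hB⟩
    · -- the cost computation
      have hbij : ∑ v : ZMod n, (α - (if v.val % 3 = 2 then α else 1)) =
          ∑ i ∈ Finset.range n, (α - (if i % 3 = 2 then α else 1)) := by
        apply Finset.sum_bij (fun (v : ZMod n) _ => v.val)
        · intro v _; exact Finset.mem_range.mpr (ZMod.val_lt v)
        · intro a _ b _ h; exact ZMod.val_injective n h
        · intro i hi
          exact ⟨(i : ZMod n), Finset.mem_univ _,
            ZMod.val_cast_of_lt (Finset.mem_range.mp hi)⟩
        · intro v _; rfl
      rw [hbij, count_aux]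
  · -- lower bound
    rintro c ⟨pos, hbound, hvalid, rfl⟩
    set b : ZMod n → ℕ := fun v => if pos v = 1 then 0 else 1 with hb
    have hble : ∀ v, b v ≤ 1 := by intro v; simp only [hb]; split <;> omega
    have key : ∀ v : ZMod n, b v + b (v + 1) + b (v + 2) ≤ 1 := by
      intro v
      rcases hvalid v with ⟨e1, e2⟩ | ⟨e1, e2⟩ | ⟨e1, e2⟩ <;>
        simp only [hb] <;> split_ifs <;> omega
    have hcard : (Finset.univ : Finset (ZMod n)).card = n := by
      simp [Finset.card_univ, ZMod.card]
    have hshift : ∀ k : ZMod n, ∑ v : ZMod n, b (v + k) = ∑ v : ZMod n, b v :=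
      fun k => Fintype.sum_equiv (Equiv.addRight k) _ _ (fun v => rfl)
    have hsum3 : 3 * ∑ v : ZMod n, b v ≤ n := by
      have := Finset.sum_le_sum (fun v (_ : v ∈ Finset.univ) => key v)
      rw [Finset.sum_add_distrib, Finset.sum_add_distrib, hshift 1, hshift 2,
        Finset.sum_const, hcard, smul_eq_mul, mul_one] at this
      omega
    have hb_le : ∑ v : ZMod n, b v ≤ n / 3 := by omega
    have hsplit : (∑ v : ZMod n, (1 - b v)) + ∑ v : ZMod n, b v = n := by
      rw [← Finset.sum_add_distrib]
      have : ∀ v : ZMod n, (1 - b v) + b v = 1 := fun v => by have := hble v; omega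
      simp only [this, Finset.sum_const, hcard, smul_eq_mul, mul_one]
    have hlow : (∑ v : ZMod n, (1 - b v)) * (α - 1) ≤ ∑ v : ZMod n, (α - pos v) := by
      rw [Finset.sum_mul]
      apply Finset.sum_le_sum
      intro v _
      have hbv := hbound v
      simp only [hb]
      split_ifs with h
      · omega
      · simp
    calc (2 * (n / 3) + n % 3) * (α - 1)
        ≤ (∑ v : ZMod n, (1 - b v)) * (α - 1) :=
          Nat.mul_le_mul_right _ (by omega)
      _ ≤ _ := hlow
end

section
/- Let f : ZMod n → Bool (n ≥ 3) indicate for each node of a cycle whether position 1 is chosen. If for every i, at least two of f(i), f(i+1), f(i+2) are true, then the number of i with f(i) = true is at least 2⌊n/3⌋ + (n mod 3). -/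
/-!
A node marked `false` forces its two successors to be `true`, so the set `S` of `false` nodes is
disjoint from its translates `S + 1` and `S + 2`. These three translates have `|S|` elements each,
hence `3 |S| ≤ n`, and the number of `true` nodes is at least `n - ⌊n/3⌋ = 2⌊n/3⌋ + (n mod 3)`.
-/

open Finset

theorem three_mul_card_le_of_add_notMem {G : Type*} [AddGroup G] [Fintype G] [DecidableEq G]
    {S : Finset G} {g : G} (hS : ∀ i ∈ S, i + g ∉ S ∧ i + 2 • g ∉ S) :
    3 * #S ≤ Fintype.card G := by
  have hS₁ : Disjoint S (S.image (· + g)) := by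
    simp only [disjoint_left, mem_image, not_exists, not_and]
    exact fun x hx i hi hix => (hS i hi).1 (hix ▸ hx)
  have hS₂ : Disjoint (S ∪ S.image (· + g)) (S.image (· + 2 • g)) := by
    simp only [disjoint_left, mem_union, mem_image, not_exists, not_and]
    rintro _ (hx | ⟨j, hj, rfl⟩) i hi hix
    · exact (hS i hi).2 (hix ▸ hx)
    · rw [two_nsmul, ← add_assoc, add_left_inj] at hix
      exact (hS i hi).1 (hix ▸ hj)
  calc 3 * #S = #(S ∪ S.image (· + g) ∪ S.image (· + 2 • g)) := by
        rw [card_union_of_disjoint hS₂, card_union_of_disjoint hS₁,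
          card_image_of_injective _ (add_left_injective _),
          card_image_of_injective _ (add_left_injective _)]
        ring
    _ ≤ Fintype.card G := card_le_univ _

theorem stmt_11_general (n : ℕ) [NeZero n] (f : ZMod n → Bool)
    (h : ∀ i : ZMod n,
      (f i = true ∧ f (i + 1) = true) ∨ (f i = true ∧ f (i + 2) = true) ∨
      (f (i + 1) = true ∧ f (i + 2) = true)) :
    2 * (n / 3) + n % 3 ≤ (univ.filter (fun i : ZMod n => f i = true)).card := by
  have hsucc : ∀ i, ¬f i = true → f (i + 1) = true ∧ f (i + 2 • 1) = true := by
    intro i hi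
    rw [two_nsmul, one_add_one_eq_two]
    rcases h i with ⟨hi', -⟩ | ⟨hi', -⟩ | hsucc
    exacts [absurd hi' hi, absurd hi' hi, hsucc]
  have hbound := three_mul_card_le_of_add_notMem (S := univ.filter fun i => ¬f i = true) (g := 1)
    (by simpa only [mem_filter, mem_univ, true_and, not_not] using hsucc)
  have hsplit := card_filter_add_card_filter_not (s := univ) (fun i : ZMod n => f i = true)
  rw [ZMod.card] at hbound
  rw [card_univ, ZMod.card] at hsplit
  omega

/-- If `f : ZMod n → Bool` (`n ≥ 3`) is such that among every three consecutive nodes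
of the cycle at least two are marked `true`, then at least `2⌊n/3⌋ + (n mod 3)` nodes
are marked `true`. -/
theorem stmt_11 (n : ℕ) [NeZero n] (hn : 3 ≤ n) (f : ZMod n → Bool)
    (h : ∀ i : ZMod n,
      (f i = true ∧ f (i + 1) = true) ∨ (f i = true ∧ f (i + 2) = true) ∨
      (f (i + 1) = true ∧ f (i + 2) = true)) :
    2 * (n / 3) + n % 3 ≤ (univ.filter (fun i : ZMod n => f i = true)).card :=
  stmt_11_general n f h
end

section
/- Let G = (V, E) be a finite simple connected graph on n vertices with m edges, and consider the Markov chain on profiles where in each round one uniformly random node and one uniformly random unordered pair of distinct alternatives (from α ≥ 3 alternatives) are chosen, and the node swaps the pair in its linear order if the pair is adjacent in its order and more than half of its neighbors disagree with its relative ranking of the pair. Define the potential Φ(P) = ∑_{\{v_i,v_j\} ∈ E} |{(a,b) : a ≠ b, v_i and v_j disagree on the relative order of a,b}|/2 (counting unordered pairs). Then 0 ≤ Φ(P) ≤ m·C(α,2) for every profile P, and every effective update strictly decreases Φ by at least 1. -/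
open Finset

/-- Nodes with orders `σ, τ` (rank functions: alternative ↦ position) disagree on the
pair of distinct alternatives `a, b` if one ranks `a` above `b` and the other ranks
`b` above `a`. -/
def PDdisagree {α : ℕ} (σ τ : Fin α ≃ Fin α) (a b : Fin α) : Prop :=
  ¬ ((σ a < σ b) ↔ (τ a < τ b))

instance {α : ℕ} (σ τ : Fin α ≃ Fin α) (a b : Fin α) :
    Decidable (PDdisagree σ τ a b) := by unfold PDdisagree; infer_instance

/-- The potential `Φ(P) = ∑_{edges {u,v}} #{unordered pairs {a,b} : u, v disagree}`,
counting each edge once (via a linear order on `V`) and each unordered pair of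
alternatives once. -/
def PDpotential {V : Type*} [Fintype V] [LinearOrder V] (G : SimpleGraph V)
    [DecidableRel G.Adj] {α : ℕ} (P : V → (Fin α ≃ Fin α)) : ℕ :=
  (univ.filter (fun q : (V × V) × Fin α × Fin α =>
    q.1.1 < q.1.2 ∧ G.Adj q.1.1 q.1.2 ∧ q.2.1 < q.2.2 ∧
      PDdisagree (P q.1.1) (P q.1.2) q.2.1 q.2.2)).card

/-! Each term of `Φ` is an edge together with an unordered pair of alternatives, so
`Φ ≤ m·C(α,2)`. Since `a` and `b` are adjacent in the order of `v`, swapping them changes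
`v`'s relative order of no other pair; hence the only terms of `Φ` that change are those of the
pair `{a, b}` on the edges at `v`, where the `d` disagreeing neighbours become agreeing and the
`deg v - d` agreeing ones become disagreeing. So `Φ` drops by `2d - deg v ≥ 1`. -/

lemma PDdisagree_comm {α : ℕ} (σ τ : Fin α ≃ Fin α) (a b : Fin α) :
    PDdisagree σ τ a b ↔ PDdisagree τ σ a b :=
  not_congr Iff.comm

lemma PDdisagree_symm {α : ℕ} (σ τ : Fin α ≃ Fin α) {a b : Fin α} (hab : a ≠ b) :
    PDdisagree σ τ a b ↔ PDdisagree σ τ b a := by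
  have hσ := σ.injective.ne hab
  have hτ := τ.injective.ne hab
  simp only [PDdisagree, Fin.lt_def, ne_eq, Fin.ext_iff] at *
  omega

lemma PDdisagree_swap_trans_self {α : ℕ} (σ τ : Fin α ≃ Fin α) {a b : Fin α} (hab : a ≠ b) :
    PDdisagree ((Equiv.swap a b).trans σ) τ a b ↔ ¬ PDdisagree σ τ a b := by
  have hσ := σ.injective.ne hab
  simp only [PDdisagree, Equiv.trans_apply, Equiv.swap_apply_left, Equiv.swap_apply_right,
    Fin.lt_def, ne_eq, Fin.ext_iff] at *
  omega

-- Every `z ∉ {a, b}` lies on the same side of the adjacent positions `σ a` and `σ b`.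
lemma lt_iff_of_swap_adjacent {β : Type*} [DecidableEq β] {n : ℕ} {σ : β → Fin n}
    (hσ : Function.Injective σ) {a b : β}
    (hadj : (σ a : ℕ) + 1 = σ b ∨ (σ b : ℕ) + 1 = σ a) {x y : β} (hxy : x ≠ y)
    (hab : ¬(x = a ∧ y = b)) (hba : ¬(x = b ∧ y = a)) :
    σ (Equiv.swap a b x) < σ (Equiv.swap a b y) ↔ σ x < σ y := by
  have hne : ∀ {p q}, p ≠ q → (σ p : ℕ) ≠ σ q := fun h => Fin.val_ne_of_ne (hσ.ne h)
  simp only [Fin.lt_def, Equiv.swap_apply_def]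
  grind

lemma card_filter_lt_adj_eq_card_edgeFinset {V : Type*} [Fintype V] [LinearOrder V]
    (G : SimpleGraph V) [DecidableRel G.Adj] :
    #{p : V × V | p.1 < p.2 ∧ G.Adj p.1 p.2} = #G.edgeFinset := by
  refine card_nbij (fun p => s(p.1, p.2)) ?_ ?_ ?_
  · rintro ⟨x, y⟩ hp
    simp_all
  · rintro ⟨x, y⟩ hp ⟨x', y'⟩ hp' h
    simp only [coe_filter, mem_univ, true_and, Set.mem_ofPred_eq, Sym2.eq_iff] at hp hp' h
    grind
  · intro e he
    induction e using Sym2.ind with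
    | h x y =>
      rw [SimpleGraph.coe_edgeFinset, SimpleGraph.mem_edgeSet] at he
      rcases he.ne.lt_or_gt with hxy | hyx
      · exact ⟨(x, y), by simp [hxy, he], rfl⟩
      · exact ⟨(y, x), by simp [hyx, he.symm], Sym2.eq_swap⟩

lemma card_filter_fst_lt_snd {β : Type*} [Fintype β] [LinearOrder β] :
    #{p : β × β | p.1 < p.2} = (Fintype.card β).choose 2 := by
  rw [← SimpleGraph.card_edgeFinset_top_eq_card_choose_two,
    ← card_filter_lt_adj_eq_card_edgeFinset]
  simp only [SimpleGraph.top_adj]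
  congr! 2 with p
  exact ⟨fun h => ⟨h, h.ne⟩, And.left⟩

section Potential

variable {V : Type*} [Fintype V] [LinearOrder V] (G : SimpleGraph V) [DecidableRel G.Adj]
  {α : ℕ}

def PDdisagreements (Q : V → (Fin α ≃ Fin α)) : Finset ((V × V) × Fin α × Fin α) :=
  {q | q.1.1 < q.1.2 ∧ G.Adj q.1.1 q.1.2 ∧ q.2.1 < q.2.2 ∧
    PDdisagree (Q q.1.1) (Q q.1.2) q.2.1 q.2.2}

lemma PDpotential_eq_card (Q : V → (Fin α ≃ Fin α)) :
    PDpotential G Q = #(PDdisagreements G Q) :=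
  rfl

lemma PDpotential_le (Q : V → (Fin α ≃ Fin α)) :
    PDpotential G Q ≤ #G.edgeFinset * α.choose 2 := by
  calc PDpotential G Q
      ≤ #(({p | p.1 < p.2 ∧ G.Adj p.1 p.2} : Finset (V × V)) ×ˢ
          ({p | p.1 < p.2} : Finset (Fin α × Fin α))) := by
        refine card_le_card fun q hq => ?_
        simp only [mem_filter, mem_univ, true_and, mem_product] at hq ⊢
        exact ⟨⟨hq.1, hq.2.1⟩, hq.2.2.1⟩
    _ = #G.edgeFinset * α.choose 2 := by
        rw [card_product, card_filter_lt_adj_eq_card_edgeFinset, card_filter_fst_lt_snd,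
          Fintype.card_fin]

lemma card_filter_PDdisagreements_at (Q : V → (Fin α ≃ Fin α)) (v : V) {a b : Fin α}
    (hab : a < b) :
    #{q ∈ PDdisagreements G Q | q.2 = (a, b) ∧ (q.1.1 = v ∨ q.1.2 = v)} =
      #{u ∈ G.neighborFinset v | PDdisagree (Q v) (Q u) a b} := by
  refine card_nbij' (fun q => if q.1.1 = v then q.1.2 else q.1.1)
    (fun u => ((min u v, max u v), (a, b))) ?_ ?_ ?_ ?_
  all_goals
    intro q hq
    simp only [PDdisagreements, coe_filter, mem_filter, mem_univ, true_and, Set.mem_ofPred_eq,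
      SimpleGraph.mem_neighborFinset] at hq ⊢
    grind [PDdisagree_comm, SimpleGraph.adj_symm, SimpleGraph.Adj.ne]

lemma PDpotential_eq_card_add_card (Q : V → (Fin α ≃ Fin α)) (v : V) {a b : Fin α}
    (hab : a < b) :
    PDpotential G Q =
      #{q ∈ PDdisagreements G Q | ¬(q.2 = (a, b) ∧ (q.1.1 = v ∨ q.1.2 = v))} +
        #{u ∈ G.neighborFinset v | PDdisagree (Q v) (Q u) a b} := by
  rw [PDpotential_eq_card, ← card_filter_PDdisagreements_at G Q v hab, add_comm]
  exact (card_filter_add_card_filter_not _).symm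

lemma filter_PDdisagreements_update_swap_trans (P : V → (Fin α ≃ Fin α)) (v : V) {a b : Fin α}
    (hab : a < b) (hadj : ((P v a : ℕ) + 1 = (P v b : ℕ)) ∨ ((P v b : ℕ) + 1 = (P v a : ℕ))) :
    {q ∈ PDdisagreements G (Function.update P v ((Equiv.swap a b).trans (P v))) |
        ¬(q.2 = (a, b) ∧ (q.1.1 = v ∨ q.1.2 = v))} =
      {q ∈ PDdisagreements G P | ¬(q.2 = (a, b) ∧ (q.1.1 = v ∨ q.1.2 = v))} := by
  ext ⟨⟨x, y⟩, c, d⟩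
  simp only [PDdisagreements, mem_filter, PDdisagree]
  have hlt : ∀ z, c < d → ¬(c = a ∧ d = b) →
      ((Function.update P v ((Equiv.swap a b).trans (P v)) z c <
        Function.update P v ((Equiv.swap a b).trans (P v)) z d) ↔ P z c < P z d) := by
    intro z hcd hcd'
    rcases eq_or_ne z v with rfl | hz
    · simpa using lt_iff_of_swap_adjacent (P z).injective hadj hcd.ne hcd' (by grind)
    · simp only [Function.update_of_ne hz]
  -- On the pair `(a, b)` itself neither endpoint is `v`, so the two profiles agree there.
  grind [Function.update_of_ne]

lemma card_filter_PDdisagree_update_swap_trans (P : V → (Fin α ≃ Fin α)) (v : V) {a b : Fin α}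
    (hab : a ≠ b) :
    #{u ∈ G.neighborFinset v | PDdisagree (Function.update P v ((Equiv.swap a b).trans (P v)) v)
        (Function.update P v ((Equiv.swap a b).trans (P v)) u) a b} =
      G.degree v - #{u ∈ G.neighborFinset v | PDdisagree (P v) (P u) a b} := by
  rw [← G.card_neighborFinset_eq_degree, ← card_filter_add_card_filter_not
    (s := G.neighborFinset v) (fun u => PDdisagree (P v) (P u) a b), Nat.add_sub_cancel_left]
  congr! 2 with u hu
  have huv : u ≠ v := (G.ne_of_adj ((G.mem_neighborFinset v u).1 hu)).symm
  rw [Function.update_self, Function.update_of_ne huv]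
  exact PDdisagree_swap_trans_self _ _ hab

lemma PDpotential_update_swap_trans_add_one_le (P : V → (Fin α ≃ Fin α)) (v : V) {a b : Fin α}
    (hab : a ≠ b) (hadj : ((P v a : ℕ) + 1 = (P v b : ℕ)) ∨ ((P v b : ℕ) + 1 = (P v a : ℕ)))
    (hmaj : G.degree v <
      2 * #{u ∈ G.neighborFinset v | PDdisagree (P v) (P u) a b}) :
    PDpotential G (Function.update P v ((Equiv.swap a b).trans (P v))) + 1 ≤ PDpotential G P := by
  wlog hlt : a < b generalizing a b
  · rw [Equiv.swap_comm]
    refine this hab.symm hadj.symm ?_ (hab.symm.lt_of_le (not_lt.1 hlt))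
    simpa only [PDdisagree_symm _ _ hab] using hmaj
  have hle := card_filter_le (G.neighborFinset v) fun u => PDdisagree (P v) (P u) a b
  rw [G.card_neighborFinset_eq_degree] at hle
  rw [PDpotential_eq_card_add_card G _ v hlt, PDpotential_eq_card_add_card G P v hlt,
    filter_PDdisagreements_update_swap_trans G P v hlt hadj,
    card_filter_PDdisagree_update_swap_trans G P v hab]
  omega

end Potential

theorem stmt_12_general {V : Type*} [Fintype V] [LinearOrder V] (G : SimpleGraph V)
    [DecidableRel G.Adj] (α : ℕ)
    (P : V → (Fin α ≃ Fin α)) (v : V) (a b : Fin α) (hab : a ≠ b)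
    (hadj : ((P v a : ℕ) + 1 = (P v b : ℕ)) ∨ ((P v b : ℕ) + 1 = (P v a : ℕ)))
    (hmaj : G.degree v <
      2 * ((G.neighborFinset v).filter (fun u => PDdisagree (P v) (P u) a b)).card) :
    (∀ Q : V → (Fin α ≃ Fin α),
        0 ≤ PDpotential G Q ∧ PDpotential G Q ≤ G.edgeFinset.card * Nat.choose α 2) ∧
    PDpotential G (Function.update P v ((Equiv.swap a b).trans (P v))) + 1 ≤
      PDpotential G P :=
  ⟨fun Q => ⟨Nat.zero_le _, PDpotential_le G Q⟩,
    PDpotential_update_swap_trans_add_one_le G P v hab hadj hmaj⟩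

/-- In the preference diffusion model (`α ≥ 3` alternatives) the potential satisfies
`0 ≤ Φ(P) ≤ m·C(α,2)` for every profile `P`, and any effective update — a node `v`
swapping two alternatives `a, b` adjacent in its order on which more than half of its
neighbors disagree with it — strictly decreases `Φ` by at least `1`. -/
theorem stmt_12 {V : Type*} [Fintype V] [LinearOrder V] (G : SimpleGraph V)
    [DecidableRel G.Adj] (α : ℕ) (hα : 3 ≤ α)
    (P : V → (Fin α ≃ Fin α)) (v : V) (a b : Fin α) (hab : a ≠ b)
    (hadj : ((P v a : ℕ) + 1 = (P v b : ℕ)) ∨ ((P v b : ℕ) + 1 = (P v a : ℕ)))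
    (hmaj : G.degree v <
      2 * ((G.neighborFinset v).filter (fun u => PDdisagree (P v) (P u) a b)).card) :
    (∀ Q : V → (Fin α ≃ Fin α),
        0 ≤ PDpotential G Q ∧ PDpotential G Q ≤ G.edgeFinset.card * Nat.choose α 2) ∧
    PDpotential G (Function.update P v ((Equiv.swap a b).trans (P v))) + 1 ≤
      PDpotential G P :=
  stmt_12_general G α P v a b hab hadj hmaj
end

section
/- Let G be a d-regular graph on n vertices with second-largest absolute normalized adjacency eigenvalue λ. For any vertex subset S ⊂ V: ∑_{v ∈ V} (|Γ(v) ∩ S| − d|S|/n)² ≤ (λd)²·|S|·(1 − |S|/n). -/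
/-!
Apply the spectral hypothesis to the centred indicator `x = 1_S - |S|/n`, which sums to zero.
By regularity `(A x) v = |Γ(v) ∩ S| - d|S|/n`, and `‖x‖² = |S|(1 - |S|/n)`.
-/

open Finset Matrix

section

variable {V : Type*} [Fintype V] [DecidableEq V]

omit [DecidableEq V] in
lemma Finset.card_univ_mul_card_div_card_univ (S : Finset V) :
    (Fintype.card V : ℝ) * (#S / Fintype.card V) = #S := by
  rcases isEmpty_or_nonempty V with hV | hV
  · simp [Finset.eq_empty_of_isEmpty S]
  · exact mul_div_cancel₀ _ (by positivity)

lemma Finset.sum_indicator_sub_const (S : Finset V) (c : ℝ) :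
    ∑ v, ((if v ∈ S then 1 else 0) - c) = #S - Fintype.card V * c := by
  simp [Finset.sum_sub_distrib]

lemma Finset.sum_sq_indicator_sub_const (S : Finset V) (c : ℝ) :
    ∑ v, ((if v ∈ S then 1 else 0) - c) ^ 2 = #S * (1 - 2 * c) + Fintype.card V * c ^ 2 := by
  have h : ∀ v, ((if v ∈ S then 1 else 0) - c) ^ 2 = (if v ∈ S then 1 - 2 * c else 0) + c ^ 2 := by
    intro v; split_ifs <;> ring
  simp [h, Finset.sum_add_distrib, mul_sub]

lemma SimpleGraph.IsRegularOfDegree.adjMatrix_mulVec_indicator_sub_const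
    {G : SimpleGraph V} [DecidableRel G.Adj] {d : ℕ} (hreg : G.IsRegularOfDegree d)
    (S : Finset V) (c : ℝ) (v : V) :
    (G.adjMatrix ℝ *ᵥ fun u => (if u ∈ S then 1 else 0) - c) v =
      #(G.neighborFinset v ∩ S) - d * c := by
  simp [SimpleGraph.adjMatrix_mulVec_apply, Finset.sum_sub_distrib, Finset.sum_ite_mem, hreg v]

end

theorem stmt_15_general {V : Type*} [Fintype V] [DecidableEq V] (G : SimpleGraph V)
    [DecidableRel G.Adj] (n d : ℕ) (hn : Fintype.card V = n)
    (hreg : G.IsRegularOfDegree d) (lam : ℝ)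
    (hspec : ∀ x : V → ℝ, ∑ v : V, x v = 0 →
      ∑ v : V, ((G.adjMatrix ℝ).mulVec x v) ^ 2 ≤ (lam * d) ^ 2 * ∑ v : V, (x v) ^ 2)
    (S : Finset V) :
    ∑ v : V, (((G.neighborFinset v ∩ S).card : ℝ) - d * S.card / n) ^ 2 ≤
      (lam * d) ^ 2 * S.card * (1 - S.card / n) := by
  subst hn
  set c : ℝ := #S / Fintype.card V
  have hc : (Fintype.card V : ℝ) * c = #S := S.card_univ_mul_card_div_card_univ
  have h := hspec (fun u => (if u ∈ S then 1 else 0) - c)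
    (by rw [S.sum_indicator_sub_const, hc, sub_self])
  simp only [hreg.adjMatrix_mulVec_indicator_sub_const, S.sum_sq_indicator_sub_const] at h
  calc ∑ v, ((#(G.neighborFinset v ∩ S) : ℝ) - d * #S / Fintype.card V) ^ 2
      = ∑ v, ((#(G.neighborFinset v ∩ S) : ℝ) - d * c) ^ 2 := by simp only [c, mul_div_assoc]
    _ ≤ (lam * d) ^ 2 * (#S * (1 - 2 * c) + Fintype.card V * c ^ 2) := h
    _ = (lam * d) ^ 2 * #S * (1 - c) := by rw [sq c, ← mul_assoc, hc]; ring

/-- Expander mixing variant: let `G` be a `d`-regular graph on `n` vertices whose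
normalized adjacency matrix has second-largest absolute eigenvalue at most `λ`
(expressed spectrally: `‖A x‖ ≤ λ d ‖x‖` for all `x` orthogonal to the all-ones
vector).  Then for every vertex subset `S`,
`∑_{v} (|Γ(v) ∩ S| − d|S|/n)² ≤ (λd)²·|S|·(1 − |S|/n)`. -/
theorem stmt_15 {V : Type*} [Fintype V] [DecidableEq V] (G : SimpleGraph V)
    [DecidableRel G.Adj] (n d : ℕ) (hn : Fintype.card V = n) (hn0 : 0 < n)
    (hreg : G.IsRegularOfDegree d) (lam : ℝ) (hlam : 0 ≤ lam)
    (hspec : ∀ x : V → ℝ, ∑ v : V, x v = 0 →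
      ∑ v : V, ((G.adjMatrix ℝ).mulVec x v) ^ 2 ≤ (lam * d) ^ 2 * ∑ v : V, (x v) ^ 2)
    (S : Finset V) :
    ∑ v : V, (((G.neighborFinset v ∩ S).card : ℝ) - d * S.card / n) ^ 2 ≤
      (lam * d) ^ 2 * S.card * (1 - S.card / n) :=
  stmt_15_general G n d hn hreg lam hspec S
end
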